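/- With notation as above, if λ = 0 then φ is surjective if and only if (μ ≠ 0 and 1 ∈ J) or J = ℕ*. -/

import Mathlib

/-- Rooted trees with vertices decorated by `D` (a root decoration and a list of subtrees). -/
inductive RT (D : Type*) : Type _
  | node : D → List (RT D) → RT D

namespace RT

variable {D : Type*}

mutual
  /-- The degree of a decorated rooted tree: the sum of the (positive integer) degrees of
  the decorations of its vertices. -/
  def degN (w : D → ℕ+) : RT D → ℕ
    | .node j c => (w j : ℕ) + degListN w c
  /-- Sum of degrees of a list of trees. -/
  def degListN (w : D → ℕ+) : List (RT D) → ℕ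
    | [] => 0
    | t :: ts => degN w t + degListN w ts
end

theorem degN_pos (w : D → ℕ+) : ∀ t : RT D, 0 < degN w t
  | .node j c => by
      rw [degN]
      exact Nat.lt_of_lt_of_le (w j).2 (Nat.le_add_right _ _)

/-- The degree of a decorated rooted tree, as a positive integer. -/
def deg (w : D → ℕ+) (t : RT D) : ℕ+ := ⟨degN w t, degN_pos w t⟩

mutual
  /-- The list of all graftings of the tree `t` on the vertices of the tree `s`. -/
  def graftings (t : RT D) : RT D → List (RT D)
    | .node j c => RT.node j (t :: c) :: (graftingsList t c).map fun c' => RT.node j c'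
  /-- All ways to graft `t` on a vertex of one of the trees of a list (forest). -/
  def graftingsList (t : RT D) : List (RT D) → List (List (RT D))
    | [] => []
    | s :: rest => ((graftings t s).map fun s' => s' :: rest) ++
        ((graftingsList t rest).map fun rest' => s :: rest')
end

end RT

/-- The pre-Lie product of the free pre-Lie algebra `g_CK^J` on rooted trees decorated by `J`
(`t ∘ t' = Σ` of all graftings of `t` on the vertices of `t'`), extended bilinearly to the span
of trees. -/
noncomputable def gprod {D : Type*} (K : Type*) [Field K] (x y : RT D →₀ K) : RT D →₀ K :=
  x.sum fun t a => y.sum fun s b =>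
    (a * b) • ((RT.graftings t s).map fun u => Finsupp.single u (1 : K)).sum

/-- The Faà di Bruno pre-Lie algebra: basis `(e_i)_{i≥1}`, product
`e_i ∘ e_j = (λ j − μ) e_{i+j}`. -/
noncomputable def fdbMul (K : Type*) [Field K] (lam mu : K) (x y : ℕ+ →₀ K) : ℕ+ →₀ K :=
  x.sum fun i a => y.sum fun j b => Finsupp.single (i + j) (a * b * (lam * ((j : ℕ) : K) - mu))

/-!
Every tree with at least two vertices lies in the span of pre-Lie products: grafting `t` on
`•_j c` gives `•_j (t :: c)` plus trees whose root still has `|c|` children, so induction on the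
number of children of the root expresses `•_j (t :: c)` through products. Hence `φ` is
determined on such trees by `fdbMul`, whose values vanish in degree `1`, and vanish altogether
when `λ = μ = 0`; the only other vectors in the image are the `e_j` with `j ∈ J`. Conversely,
`φ` sends the ladder of `n + 1` vertices decorated by `1` to `(λ - μ)ⁿ e_{n+1}`.
-/

open Finsupp

namespace RT

variable {D : Type*}

theorem length_of_mem_graftingsList {t : RT D} :
    ∀ {c c' : List (RT D)}, c' ∈ graftingsList t c → c'.length = c.length
  | [], _, h => by simp [graftingsList] at h
  | s :: rest, _, h => by
      rw [graftingsList, List.mem_append, List.mem_map, List.mem_map] at h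
      rcases h with ⟨s', -, rfl⟩ | ⟨rest', h, rfl⟩
      · rfl
      · simp [length_of_mem_graftingsList h]

def ladder (j : D) : ℕ → RT D
  | 0 => node j []
  | n + 1 => node j [ladder j n]

theorem graftings_ladder_node_nil (j : D) (n : ℕ) :
    graftings (ladder j n) (node j []) = [ladder j (n + 1)] := by
  rw [graftings, graftingsList, List.map_nil, ladder]

end RT

open RT

section FreePreLie

variable {D : Type*} {K : Type*} [Field K]

theorem gprod_single_single (t s : RT D) :
    gprod K (single t 1) (single s 1) = ((graftings t s).map fun u => single u (1 : K)).sum := by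
  unfold gprod
  rw [sum_single_index (by simp), sum_single_index (by simp), one_mul, one_smul]

theorem gprod_single_node (t : RT D) (j : D) (c : List (RT D)) :
    gprod K (single t 1) (single (node j c) 1) =
      single (node j (t :: c)) 1 + ((graftingsList t c).map fun c' => single (node j c') 1).sum := by
  rw [gprod_single_single, graftings, List.map_cons, List.sum_cons, List.map_map]
  rfl

theorem single_node_cons_mem_span_gprod (j : D) (t : RT D) (c : List (RT D)) :
    single (node j (t :: c)) (1 : K) ∈ Submodule.span K (Set.range (Function.uncurry (gprod K))) := by
  obtain ⟨n, hn⟩ : ∃ n, c.length = n := ⟨_, rfl⟩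
  induction n generalizing j t c with
  | zero =>
    rw [List.length_eq_zero_iff] at hn
    subst hn
    have hprod := gprod_single_node (K := K) t j []
    rw [graftingsList, List.map_nil, List.sum_nil, add_zero] at hprod
    exact Submodule.subset_span ⟨(single t 1, single (node j []) 1), hprod⟩
  | succ n ih =>
    rw [eq_sub_of_add_eq (gprod_single_node (K := K) t j c).symm]
    refine sub_mem (Submodule.subset_span ⟨(single t 1, single (node j c) 1), rfl⟩) (list_sum_mem fun x hx => ?_)
    obtain ⟨c', hc', rfl⟩ := List.mem_map.1 hx
    obtain ⟨s, rest, rfl⟩ : ∃ s rest, c' = s :: rest := by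
      cases c' with
      | nil => simp [← length_of_mem_graftingsList hc'] at hn
      | cons s rest => exact ⟨s, rest, rfl⟩
    have hrest : rest.length = n := by
      simpa [hn] using length_of_mem_graftingsList hc'
    exact ih j s rest hrest

theorem linearMap_eq_zero_of_gprod_of_leaf {M : Type*} [AddCommGroup M] [Module K M]
    (ψ : (RT D →₀ K) →ₗ[K] M) (hprod : ∀ x y, ψ (gprod K x y) = 0)
    (hleaf : ∀ j, ψ (single (node j []) 1) = 0) : ψ = 0 := by
  have hspan : Submodule.span K (Set.range (Function.uncurry (gprod K))) ≤ LinearMap.ker ψ :=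
    Submodule.span_le.2 (Set.range_subset_iff.2 fun p => hprod p.1 p.2)
  refine lhom_ext fun t a => ?_
  rw [← mul_one a, ← smul_single_one, map_smul, LinearMap.zero_apply]
  obtain ⟨j, _ | ⟨t₀, c⟩⟩ := t
  · rw [hleaf, smul_zero]
  · rw [hspan (single_node_cons_mem_span_gprod j t₀ c), smul_zero]

end FreePreLie

section FaaDiBruno

variable {K : Type*} [Field K]

theorem fdbMul_single_single (lam mu : K) (a b : ℕ+) (x y : K) :
    fdbMul K lam mu (single a x) (single b y) =
      single (a + b) (x * y * (lam * ((b : ℕ) : K) - mu)) := by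
  unfold fdbMul
  rw [sum_single_index (by simp), sum_single_index (by simp)]

theorem fdbMul_apply_one (lam mu : K) (x y : ℕ+ →₀ K) : fdbMul K lam mu x y 1 = 0 := by
  have hne : ∀ i j : ℕ+, i + j ≠ 1 := fun i j =>
    ((one_le (a := i)).trans_lt (PNat.lt_add_right i j)).ne'
  simp [fdbMul, Finsupp.sum_apply, hne]

theorem fdbMul_zero_zero (x y : ℕ+ →₀ K) : fdbMul K 0 0 x y = 0 := by
  simp [fdbMul]

end FaaDiBruno

theorem LinearMap.surjective_of_single_one_mem_range {K M ι : Type*} [Field K] [AddCommGroup M]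
    [Module K M] (f : M →ₗ[K] (ι →₀ K)) (h : ∀ i, Finsupp.single i 1 ∈ LinearMap.range f) :
    Function.Surjective f := by
  rw [← LinearMap.range_eq_top, eq_top_iff, ← (Finsupp.basisSingleOne (R := K) (ι := ι)).span_eq, Submodule.span_le]
  rintro _ ⟨i, rfl⟩
  simpa using h i

section Morphism

variable {K : Type*} [Field K] {lam mu : K} {J : Set ℕ+} {φ : (RT J →₀ K) →ₗ[K] (ℕ+ →₀ K)}

theorem apply_eq_zero_of_notMem
    (hgen : ∀ j : J, φ (single (node j []) 1) = single (j : ℕ+) 1)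
    (hmor : ∀ x y : RT J →₀ K, φ (gprod K x y) = fdbMul K lam mu (φ x) (φ y))
    {n : ℕ+} (hn : n ∉ J) (h : n = 1 ∨ lam = 0 ∧ mu = 0) (x : RT J →₀ K) : φ x n = 0 := by
  suffices hψ : lapply n ∘ₗ φ = 0 from LinearMap.congr_fun hψ x
  refine linearMap_eq_zero_of_gprod_of_leaf _ (fun x y => ?_) (fun j => ?_)
  · rw [LinearMap.comp_apply, lapply_apply, hmor]
    rcases h with rfl | ⟨rfl, rfl⟩
    · exact fdbMul_apply_one _ _ _ _
    · rw [fdbMul_zero_zero, Finsupp.zero_apply]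
  · rw [LinearMap.comp_apply, lapply_apply, hgen]
    exact single_eq_of_ne fun hj => hn (hj ▸ j.2)

theorem apply_single_ladder {j : J} (hj : (j : ℕ+) = 1)
    (hgen : ∀ j : J, φ (single (node j []) 1) = single (j : ℕ+) 1)
    (hmor : ∀ x y : RT J →₀ K, φ (gprod K x y) = fdbMul K lam mu (φ x) (φ y)) (n : ℕ) :
    φ (single (ladder j n) 1) = (lam - mu) ^ n • single n.succPNat 1 := by
  induction n with
  | zero => rw [ladder, hgen, hj, pow_zero, one_smul]; rfl
  | succ n ih =>
    have hprod : single (ladder j (n + 1)) (1 : K) =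
        gprod K (single (ladder j n) 1) (single (node j []) 1) := by
      rw [gprod_single_single, graftings_ladder_node_nil, List.map_singleton, List.sum_singleton]
    have hdeg : n.succPNat + j = (n + 1).succPNat := by rw [hj]; rfl
    rw [hprod, hmor, ih, hgen, smul_single_one, fdbMul_single_single, hdeg, smul_single_one, hj]
    simp [pow_succ]

end Morphism

/-- With `λ = 0`, the pre-Lie morphism `φ : g_CK^J → g_FdB` (the unique one with
`φ(•_j) = e_j`, where `e_i ∘ e_j = −μ e_{i+j}`) is surjective if and only if
(`μ ≠ 0` and `1 ∈ J`) or `J = ℕ*`. -/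
theorem phi_surjective_iff_of_lam_eq_zero (K : Type*) [Field K] [CharZero K] (lam mu : K)
    (hlam : lam = 0) (J : Set ℕ+)
    (φ : (RT J →₀ K) →ₗ[K] (ℕ+ →₀ K))
    (hgen : ∀ j : J, φ (Finsupp.single (RT.node j []) 1) = Finsupp.single (j : ℕ+) 1)
    (hmor : ∀ x y : RT J →₀ K, φ (gprod K x y) = fdbMul K lam mu (φ x) (φ y)) :
    Function.Surjective φ ↔ ((mu ≠ 0 ∧ (1 : ℕ+) ∈ J) ∨ J = Set.univ) := by
  constructor
  · intro hsurj
    by_contra! hcon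
    obtain ⟨n, hnJ, hn⟩ : ∃ n ∉ J, n = 1 ∨ lam = 0 ∧ mu = 0 := by
      by_cases h1 : (1 : ℕ+) ∈ J
      · obtain ⟨n, hn⟩ := (Set.ne_univ_iff_exists_notMem J).1 hcon.2
        exact ⟨n, hn, Or.inr ⟨hlam, not_not.1 fun hmu => hcon.1 hmu h1⟩⟩
      · exact ⟨1, h1, Or.inl rfl⟩
    obtain ⟨x, hx⟩ := hsurj (single n 1)
    simpa [hx] using apply_eq_zero_of_notMem hgen hmor hnJ hn x
  · refine fun h => φ.surjective_of_single_one_mem_range fun n => ?_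
    rcases h with ⟨hmu, h1⟩ | rfl
    · have hpow : (lam - mu) ^ n.natPred ≠ 0 := pow_ne_zero _ (by simpa [hlam] using hmu)
      refine ⟨((lam - mu) ^ n.natPred)⁻¹ • single (ladder ⟨1, h1⟩ n.natPred) 1, ?_⟩
      rw [map_smul, apply_single_ladder rfl hgen hmor, smul_smul, inv_mul_cancel₀ hpow,
        one_smul, PNat.succPNat_natPred]
    · exact ⟨single (node ⟨n, trivial⟩ []) 1, hgen ⟨n, trivial⟩⟩
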